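/- arXiv:1611.07184 — 2 statements merged into one kernel-verified Lean document; each statement's English description precedes it below -/
import Mathlib

section
/- The group with presentation ⟨x, y, z | x z y⁻¹ x = 1, x⁻¹ y z = 1, x y = 1⟩ is cyclic of order 5. -/
/-!
The relations force `y = x⁻¹`, then `z = x²`, and then the first one reads `x⁵ = 1`; so the group
is generated by `x` and has order dividing 5. Conversely `x ↦ 1, y ↦ -1, z ↦ 2` respects the
relations in `ℤ/5`, so `x` has order exactly 5.
-/

theorem eq_inv_and_eq_sq_and_pow_five_eq_one_of_relations {G : Type*} [Group G] {a b c : G}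
    (h₁ : a * c * b⁻¹ * a = 1) (h₂ : a⁻¹ * b * c = 1) (h₃ : a * b = 1) :
    b = a⁻¹ ∧ c = a ^ 2 ∧ a ^ 5 = 1 := by
  have hb : b = a⁻¹ := eq_inv_of_mul_eq_one_right h₃
  have hc : c = a ^ 2 := by
    rw [hb, ← mul_inv_rev, inv_mul_eq_one] at h₂
    rw [← h₂, sq]
  refine ⟨hb, hc, ?_⟩
  rw [hb, hc, inv_inv] at h₁
  simpa only [← pow_succ, ← pow_succ', mul_assoc] using h₁

open PresentedGroup Subgroup

def godeauxRels : Set (FreeGroup (Fin 3)) :=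
  {.of 0 * .of 2 * (.of 1)⁻¹ * .of 0, (.of 0)⁻¹ * .of 1 * .of 2, .of 0 * .of 1}

abbrev GodeauxGroup := PresentedGroup godeauxRels

namespace GodeauxGroup

theorem of_one_eq_inv_and_of_two_eq_sq_and_of_zero_pow_five :
    (of 1 : GodeauxGroup) = (of 0)⁻¹ ∧ (of 2 : GodeauxGroup) = of 0 ^ 2 ∧
      (of 0 : GodeauxGroup) ^ 5 = 1 :=
  eq_inv_and_eq_sq_and_pow_five_eq_one_of_relations (one_of_mem (by simp [godeauxRels]))
    (one_of_mem (by simp [godeauxRels])) (one_of_mem (by simp [godeauxRels]))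

theorem mem_zpowers_of_zero (g : GodeauxGroup) : g ∈ zpowers (of 0) := by
  obtain ⟨h₁, h₂, -⟩ := of_one_eq_inv_and_of_two_eq_sq_and_of_zero_pow_five
  refine generated_by _ _ (fun i ↦ ?_) g
  fin_cases i
  · exact mem_zpowers _
  · exact h₁ ▸ inv_mem (mem_zpowers _)
  · exact h₂ ▸ pow_mem (mem_zpowers _) 2

def toZMod : GodeauxGroup →* Multiplicative (ZMod 5) :=
  toGroup (f := fun i ↦ .ofAdd (![1, -1, 2] i)) <| by
    simp only [godeauxRels, Set.mem_insert_iff, Set.mem_singleton_iff]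
    rintro r (rfl | rfl | rfl) <;> decide

theorem orderOf_of_zero : orderOf (of 0 : GodeauxGroup) = 5 := by
  have h_image : orderOf (toZMod (of 0)) = 5 := by
    rw [toZMod, toGroup.of]
    exact (orderOf_ofAdd_eq_addOrderOf _).trans (ZMod.addOrderOf_one 5)
  refine Nat.dvd_antisymm ?_ (h_image ▸ orderOf_map_dvd toZMod (of 0))
  exact orderOf_dvd_of_pow_eq_one of_one_eq_inv_and_of_two_eq_sq_and_of_zero_pow_five.2.2

end GodeauxGroup

/-- The group ⟨x, y, z | x z y⁻¹ x = 1, x⁻¹ y z = 1, x y = 1⟩ is cyclic of order 5. -/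
theorem stmt_5 :
    let x : FreeGroup (Fin 3) := FreeGroup.of 0
    let y : FreeGroup (Fin 3) := FreeGroup.of 1
    let z : FreeGroup (Fin 3) := FreeGroup.of 2
    let rels : Set (FreeGroup (Fin 3)) := {x * z * y⁻¹ * x, x⁻¹ * y * z, x * y}
    IsCyclic (PresentedGroup rels) ∧ Nat.card (PresentedGroup rels) = 5 := by
  show IsCyclic GodeauxGroup ∧ Nat.card GodeauxGroup = 5
  have hgen := GodeauxGroup.mem_zpowers_of_zero
  refine ⟨⟨of 0, hgen⟩, ?_⟩
  rw [← orderOf_eq_card_of_forall_mem_zpowers hgen, GodeauxGroup.orderOf_of_zero]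
end

section
/- Let ζ = e^{2πi/3} and τ₁ = (1−ζ)/3. In ℂ², the subgroup generated by the three lattices L₁ = ⟨(1,1), (ζ,ζ), (τ₁,τ₁)⟩, L₂ = ⟨(1,ζ), (ζ,ζ²), (τ₁, τ₁+ζ)⟩, and L₃ = ⟨(1,ζ²), (ζ,1), (τ₁, τ₁−1)⟩ equals the lattice Λ = ⟨(1,0), (ζ,0), (0,1), (0,ζ), (τ₁,τ₁)⟩. -/
/-!
The differences `(τ, τ) - (τ, τ - 1)` and `(τ, τ + ζ) - (τ, τ)` put `(0, 1)` and `(0, ζ)` into the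
span of the three lattices, and subtracting these from `(1, 1)` and `(ζ, ζ)` gives the rest of the
generators of `Λ`. Conversely each generator of the three lattices is an integral combination of the
generators of `Λ`, once `ζ²` is rewritten as `-1 - ζ`.
-/

lemma Complex.exp_two_pi_I_div_three_sq_add_self_add_one :
    exp (2 * Real.pi * I / 3) ^ 2 + exp (2 * Real.pi * I / 3) + 1 = 0 := by
  have h := (isPrimitiveRoot_exp 3 three_ne_zero).geom_sum_eq_zero (by norm_num)
  simp only [Finset.sum_range_succ, Finset.sum_range_zero, Nat.cast_ofNat] at h
  linear_combination h

namespace EisensteinLattice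

variable {R : Type*} [CommRing R] (ζ τ : R)

def twistedDiagonalGenerators : Set (R × R) :=
  {(1, 1), (ζ, ζ), (τ, τ), (1, ζ), (ζ, ζ ^ 2), (τ, τ + ζ), (1, ζ ^ 2), (ζ, 1), (τ, τ - 1)}

def coordinateGenerators : Set (R × R) :=
  {(1, 0), (ζ, 0), (0, 1), (0, ζ), (τ, τ)}

open AddSubgroup

lemma closure_coordinateGenerators_le :
    closure (coordinateGenerators ζ τ) ≤ closure (twistedDiagonalGenerators ζ τ) := by
  set L := closure (twistedDiagonalGenerators ζ τ)
  have gen {x : R × R} (hx : x ∈ twistedDiagonalGenerators ζ τ) : x ∈ L := subset_closure hx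
  have f₁ : ((0 : R), (1 : R)) ∈ L := by
    simpa using sub_mem (gen (by simp [twistedDiagonalGenerators] : (τ, τ) ∈ _))
      (gen (by simp [twistedDiagonalGenerators] : (τ, τ - 1) ∈ _))
  have fζ : ((0 : R), ζ) ∈ L := by
    simpa using sub_mem (gen (by simp [twistedDiagonalGenerators] : (τ, τ + ζ) ∈ _))
      (gen (by simp [twistedDiagonalGenerators] : (τ, τ) ∈ _))
  simp only [coordinateGenerators, closure_le, Set.insert_subset_iff, Set.singleton_subset_iff,
    SetLike.mem_coe]
  refine ⟨?_, ?_, f₁, fζ, gen (by simp [twistedDiagonalGenerators])⟩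
  · simpa using sub_mem (gen (by simp [twistedDiagonalGenerators] : ((1 : R), (1 : R)) ∈ _)) f₁
  · simpa using sub_mem (gen (by simp [twistedDiagonalGenerators] : (ζ, ζ) ∈ _)) fζ

variable {ζ} in
lemma closure_twistedDiagonalGenerators_le (hζ : ζ ^ 2 + ζ + 1 = 0) :
    closure (twistedDiagonalGenerators ζ τ) ≤ closure (coordinateGenerators ζ τ) := by
  set Λ := closure (coordinateGenerators ζ τ)
  have gen {x : R × R} (hx : x ∈ coordinateGenerators ζ τ) : x ∈ Λ := subset_closure hx
  have e₁ : ((1 : R), (0 : R)) ∈ Λ := gen (by simp [coordinateGenerators])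
  have eζ : (ζ, (0 : R)) ∈ Λ := gen (by simp [coordinateGenerators])
  have f₁ : ((0 : R), (1 : R)) ∈ Λ := gen (by simp [coordinateGenerators])
  have fζ : ((0 : R), ζ) ∈ Λ := gen (by simp [coordinateGenerators])
  have d : (τ, τ) ∈ Λ := gen (by simp [coordinateGenerators])
  have hζ2 : ζ ^ 2 = -1 - ζ := by linear_combination hζ
  simp only [twistedDiagonalGenerators, closure_le, Set.insert_subset_iff,
    Set.singleton_subset_iff, SetLike.mem_coe]
  refine ⟨?_, ?_, d, ?_, ?_, ?_, ?_, ?_, ?_⟩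
  · simpa using add_mem e₁ f₁
  · simpa using add_mem eζ fζ
  · simpa using add_mem e₁ fζ
  · simpa [hζ2, sub_eq_add_neg] using sub_mem (sub_mem eζ f₁) fζ
  · simpa using add_mem d fζ
  · simpa [hζ2, sub_eq_add_neg] using sub_mem (sub_mem e₁ f₁) fζ
  · simpa using add_mem eζ f₁
  · simpa using sub_mem d f₁

variable {ζ} in
theorem closure_twistedDiagonalGenerators_eq (hζ : ζ ^ 2 + ζ + 1 = 0) :
    closure (twistedDiagonalGenerators ζ τ) = closure (coordinateGenerators ζ τ) :=
  le_antisymm (closure_twistedDiagonalGenerators_le τ hζ) (closure_coordinateGenerators_le ζ τ)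

end EisensteinLattice

open Complex in
/-- With ζ = e^{2πi/3} and τ₁ = (1−ζ)/3, the subgroup of ℂ² generated by the three
lattices ⟨(1,1), (ζ,ζ), (τ₁,τ₁)⟩, ⟨(1,ζ), (ζ,ζ²), (τ₁,τ₁+ζ)⟩, ⟨(1,ζ²), (ζ,1), (τ₁,τ₁−1)⟩
equals the lattice ⟨(1,0), (ζ,0), (0,1), (0,ζ), (τ₁,τ₁)⟩. -/
theorem stmt_10 :
    let ζ : ℂ := Complex.exp (2 * Real.pi * Complex.I / 3)
    let τ₁ : ℂ := (1 - ζ) / 3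
    AddSubgroup.closure ({(1, 1), (ζ, ζ), (τ₁, τ₁),
        (1, ζ), (ζ, ζ ^ 2), (τ₁, τ₁ + ζ),
        (1, ζ ^ 2), (ζ, 1), (τ₁, τ₁ - 1)} : Set (ℂ × ℂ)) =
      AddSubgroup.closure ({(1, 0), (ζ, 0), (0, 1), (0, ζ), (τ₁, τ₁)} : Set (ℂ × ℂ)) :=
  EisensteinLattice.closure_twistedDiagonalGenerators_eq _
    exp_two_pi_I_div_three_sq_add_self_add_one
end
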